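/- arXiv:0812.2458 — 5 statements merged into one kernel-verified Lean document; each statement's English description precedes it below -/
import Mathlib

section
/- For any COD construction G_a defined recursively by G_1 = [[x_1, -x_2*],[x_2, x_1*]] and G_a = [[G_{a-1}, -x_{a+1}* I_{2^{a-1}}],[x_{a+1} I_{2^{a-1}}, G_{a-1}^H]], the fraction of zero entries in the 2^a × 2^a matrix G_a equals (2^a - a - 1)/2^a. -/
/-- The recursive Alamouti-type complex orthogonal design `G_a`.
`Gmat a i j` is the `(i,j)` entry of the `2^a × 2^a` design (indices `< 2^a` are
meaningful), viewed as a function of the complex variables `x 0, …, x a`.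
The base case `a = 0` is the `1×1` matrix `[x 0]`, and
`G_{a+1} = [[G_a, -x_{a+1}* I],[x_{a+1} I, G_a^H]]`. -/
noncomputable def Gmat : ℕ → ℕ → ℕ → ((ℕ → ℂ) → ℂ)
  | 0, i, j => if i = 0 ∧ j = 0 then (fun x => x 0) else 0
  | (a+1), i, j =>
      if i < 2 ^ a then
        if j < 2 ^ a then Gmat a i j
        else if j = i + 2 ^ a then (fun x => -(starRingEnd ℂ) (x (a+1))) else 0
      else
        if j < 2 ^ a then (if i = j + 2 ^ a then (fun x => x (a+1)) else 0)
        else fun x => (starRingEnd ℂ) (Gmat a (j - 2 ^ a) (i - 2 ^ a) x)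

/-!
Entry `(i, j)` of `G_a` is nonzero exactly when `i ^^^ j` is `0` or one of `2^0, …, 2^(a-1)`:
in the block recursion the diagonal blocks keep the offset `i ^^^ j`, and the scalar
off-diagonal blocks `±x_{a+1} I` contribute the offset `2^a`. Hence every row of `G_a` has
exactly `a + 1` nonzero entries, and `2^a - (a + 1)` zeros.
-/

theorem Nat.xor_two_pow_of_lt {x n : ℕ} (h : x < 2 ^ n) : x ^^^ 2 ^ n = x + 2 ^ n := by
  rw [← Nat.or_two_pow_eq_add_of_lt h]
  refine Nat.eq_of_testBit_eq fun i => ?_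
  rw [Nat.testBit_xor, Nat.testBit_or, Nat.testBit_two_pow]
  rcases eq_or_ne n i with rfl | hne
  · simp [Nat.testBit_lt_two_pow h]
  · simp [hne]

theorem Nat.xor_add_two_pow {x y n : ℕ} (hx : x < 2 ^ n) (hy : y < 2 ^ n) :
    x ^^^ (y + 2 ^ n) = (x ^^^ y) + 2 ^ n := by
  rw [← Nat.xor_two_pow_of_lt hy, ← Nat.xor_assoc, Nat.xor_two_pow_of_lt (Nat.xor_lt_two_pow hx hy)]

theorem Nat.add_two_pow_xor_add_two_pow {x y n : ℕ} (hx : x < 2 ^ n) (hy : y < 2 ^ n) :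
    (x + 2 ^ n) ^^^ (y + 2 ^ n) = x ^^^ y := by
  rw [← Nat.xor_two_pow_of_lt hx, ← Nat.xor_two_pow_of_lt hy, Nat.xor_comm y, ← Nat.xor_assoc,
    Nat.xor_assoc x, Nat.xor_self, Nat.xor_zero]

theorem Nat.lt_two_pow_or_exists_eq_add_of_lt_two_pow_succ {i n : ℕ} (h : i < 2 ^ (n + 1)) :
    i < 2 ^ n ∨ ∃ i' < 2 ^ n, i = i' + 2 ^ n := by
  rw [Nat.pow_succ] at h
  by_cases hi : i < 2 ^ n
  · exact Or.inl hi
  · exact Or.inr ⟨i - 2 ^ n, by omega, by omega⟩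

theorem ncard_setOf_xor_mem (n : ℕ) (T : Finset ℕ) (hT : ∀ t ∈ T, t < 2 ^ n) :
    {p : Fin (2 ^ n) × Fin (2 ^ n) | (p.1 : ℕ) ^^^ p.2 ∈ T}.ncard = 2 ^ n * T.card := by
  let φ : Fin (2 ^ n) × T → Fin (2 ^ n) × Fin (2 ^ n) :=
    fun q => (q.1, ⟨q.1 ^^^ q.2, Nat.xor_lt_two_pow q.1.isLt (hT _ q.2.2)⟩)
  have hφ : Function.Injective φ := by
    rintro ⟨i, t⟩ ⟨i', t'⟩ h
    simp only [φ, Prod.mk.injEq, Fin.mk.injEq] at h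
    obtain ⟨rfl, h⟩ := h
    exact Prod.ext rfl (Subtype.ext (Nat.xor_right_inj.mp h))
  have hrange : Set.range φ = {p | (p.1 : ℕ) ^^^ p.2 ∈ T} := by
    ext ⟨i, j⟩
    constructor
    · rintro ⟨⟨i, t⟩, h⟩
      simp only [φ, Prod.mk.injEq] at h
      obtain ⟨rfl, rfl⟩ := h
      simp
    · intro h
      exact ⟨(i, ⟨_, h⟩), by simp [φ]⟩
  rw [← hrange, Set.ncard_range_of_injective hφ]
  simp

def supportOffsets (a : ℕ) : Finset ℕ := insert 0 ((Finset.range a).image (2 ^ ·))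

theorem card_supportOffsets (a : ℕ) : (supportOffsets a).card = a + 1 := by
  rw [supportOffsets, Finset.card_insert_of_notMem (by simp),
    Finset.card_image_of_injective _ (Nat.pow_right_injective le_rfl), Finset.card_range]

theorem lt_of_mem_supportOffsets {a d : ℕ} (h : d ∈ supportOffsets a) : d < 2 ^ a := by
  simp only [supportOffsets, Finset.mem_insert, Finset.mem_image, Finset.mem_range] at h
  rcases h with rfl | ⟨k, hk, rfl⟩
  · positivity
  · exact Nat.pow_lt_pow_right Nat.one_lt_two hk

theorem mem_supportOffsets_succ_iff_of_lt {a d : ℕ} (hd : d < 2 ^ a) :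
    d ∈ supportOffsets (a + 1) ↔ d ∈ supportOffsets a := by
  simp only [supportOffsets, Finset.mem_insert, Finset.mem_image, Finset.mem_range]
  refine or_congr_right ⟨fun ⟨k, hk, hkd⟩ => ⟨k, ?_, hkd⟩, fun ⟨k, hk, hkd⟩ => ⟨k, by omega, hkd⟩⟩
  rcases Nat.lt_succ_iff_lt_or_eq.mp hk with hk | rfl
  · exact hk
  · omega

theorem add_two_pow_mem_supportOffsets_succ_iff {a d : ℕ} (hd : d < 2 ^ a) :
    d + 2 ^ a ∈ supportOffsets (a + 1) ↔ d = 0 := by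
  simp only [supportOffsets, Finset.mem_insert, Finset.mem_image, Finset.mem_range]
  constructor
  · rintro (h | ⟨k, hk, hkd⟩)
    · omega
    · rcases Nat.lt_succ_iff_lt_or_eq.mp hk with hk | rfl
      · have := Nat.pow_lt_pow_right Nat.one_lt_two hk
        omega
      · omega
  · rintro rfl
    exact Or.inr ⟨a, by omega, by simp⟩

section Blocks

variable {a i j : ℕ}

theorem Gmat_succ_of_lt_of_lt (hi : i < 2 ^ a) (hj : j < 2 ^ a) :
    Gmat (a + 1) i j = Gmat a i j := by
  simp [Gmat, hi, hj]

theorem Gmat_succ_of_lt_of_add (hi : i < 2 ^ a) :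
    Gmat (a + 1) i (j + 2 ^ a) =
      if i = j then fun x => -(starRingEnd ℂ) (x (a + 1)) else (0 : (ℕ → ℂ) → ℂ) := by
  simp [Gmat, hi, eq_comm]

theorem Gmat_succ_of_add_of_lt (hj : j < 2 ^ a) :
    Gmat (a + 1) (i + 2 ^ a) j = if i = j then fun x => x (a + 1) else (0 : (ℕ → ℂ) → ℂ) := by
  simp [Gmat, hj]

theorem Gmat_succ_of_add_of_add :
    Gmat (a + 1) (i + 2 ^ a) (j + 2 ^ a) = fun x => (starRingEnd ℂ) (Gmat a j i x) := by
  simp [Gmat]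

end Blocks

theorem Gmat_ne_zero_iff {a i j : ℕ} (hi : i < 2 ^ a) (hj : j < 2 ^ a) :
    Gmat a i j ≠ 0 ↔ i ^^^ j ∈ supportOffsets a := by
  induction a generalizing i j with
  | zero =>
    obtain ⟨rfl, rfl⟩ : i = 0 ∧ j = 0 := by simp_all
    have : Gmat 0 0 0 ≠ 0 := fun h => by simpa [Gmat] using congrFun h 1
    simpa [supportOffsets]
  | succ a ih =>
    rcases Nat.lt_two_pow_or_exists_eq_add_of_lt_two_pow_succ hi with hi' | ⟨i, hi', rfl⟩ <;>
    rcases Nat.lt_two_pow_or_exists_eq_add_of_lt_two_pow_succ hj with hj' | ⟨j, hj', rfl⟩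
    · rw [Gmat_succ_of_lt_of_lt hi' hj', ih hi' hj',
        mem_supportOffsets_succ_iff_of_lt (Nat.xor_lt_two_pow hi' hj')]
    · rw [Gmat_succ_of_lt_of_add hi', Nat.xor_add_two_pow hi' hj',
        add_two_pow_mem_supportOffsets_succ_iff (Nat.xor_lt_two_pow hi' hj'), Nat.xor_eq_zero_iff]
      have : (fun x : ℕ → ℂ => -(starRingEnd ℂ) (x (a + 1))) ≠ 0 := fun h => by
        simpa using congrFun h 1
      exact ite_ne_right_iff.trans (and_iff_left this)
    · rw [Gmat_succ_of_add_of_lt hj', Nat.xor_comm, Nat.xor_add_two_pow hj' hi',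
        add_two_pow_mem_supportOffsets_succ_iff (Nat.xor_lt_two_pow hj' hi'), Nat.xor_eq_zero_iff]
      have : (fun x : ℕ → ℂ => x (a + 1)) ≠ 0 := fun h => by simpa using congrFun h 1
      exact (ite_ne_right_iff.trans (and_iff_left this)).trans eq_comm
    · rw [Gmat_succ_of_add_of_add, Nat.add_two_pow_xor_add_two_pow hi' hj',
        mem_supportOffsets_succ_iff_of_lt (Nat.xor_lt_two_pow hi' hj'), Nat.xor_comm, ← ih hj' hi']
      simp only [ne_eq, funext_iff, Pi.zero_apply, map_eq_zero]

theorem fraction_of_zeros_Gmat_general (a : ℕ) :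
    Set.ncard {p : Fin (2 ^ a) × Fin (2 ^ a) | Gmat a (p.1 : ℕ) (p.2 : ℕ) = 0} =
      2 ^ a * (2 ^ a - a - 1) := by
  have hzeros : {p : Fin (2 ^ a) × Fin (2 ^ a) | Gmat a (p.1 : ℕ) (p.2 : ℕ) = 0} =
      {p | (p.1 : ℕ) ^^^ p.2 ∈ supportOffsets a}ᶜ := by
    ext p
    simp [← Gmat_ne_zero_iff p.1.isLt p.2.isLt]
  rw [hzeros, Set.ncard_compl, ncard_setOf_xor_mem a _ fun _ => lt_of_mem_supportOffsets,
    card_supportOffsets, Nat.card_eq_fintype_card, Fintype.card_prod, Fintype.card_fin,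
    ← Nat.mul_sub, Nat.sub_sub]

/-- the number of identically-zero entries of the `2^a × 2^a` design
`G_a` is `2^a * (2^a - a - 1)`, i.e. the fraction of zero entries is
`(2^a - a - 1)/2^a`. -/
theorem fraction_of_zeros_Gmat (a : ℕ) (ha : 1 ≤ a) :
    Set.ncard {p : Fin (2 ^ a) × Fin (2 ^ a) | Gmat a (p.1 : ℕ) (p.2 : ℕ) = 0} =
      2 ^ a * (2 ^ a - a - 1) :=
  fraction_of_zeros_Gmat_general a
end

section
/- In the matrix G_a (defined by the recursive Alamouti-type construction), each row and each column contains exactly a+1 non-zero entries. -/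
open scoped Classical

namespace Nat

theorem count_congr_of_lt {p q : ℕ → Prop} [DecidablePred p] [DecidablePred q] {n : ℕ}
    (h : ∀ k < n, p k ↔ q k) : count p n = count q n := by
  simp only [count_eq_card_filter_range]
  exact congrArg Finset.card (Finset.filter_congr fun k hk => h k (Finset.mem_range.1 hk))

theorem count_eq_one_of_lt {c n : ℕ} (hc : c < n) : count (· = c) n = 1 := by
  simp [count_eq_card_filter_range, Finset.filter_eq', hc]

theorem lt_or_exists_eq_add (i n : ℕ) : i < n ∨ ∃ k, i = n + k :=
  (lt_or_ge i n).imp_right Nat.exists_eq_add_of_le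

end Nat

theorem Set.ncard_setOf_fin_eq_count (n : ℕ) (p : ℕ → Prop) [DecidablePred p] :
    {k : Fin n | p k}.ncard = Nat.count p n := by
  rw [Nat.count_eq_card_filter_range, ← Set.ncard_coe_finset,
    ← Set.ncard_image_of_injective _ Fin.val_injective]
  congr 1
  ext k
  simp only [Set.mem_image, Set.mem_ofPred_eq, Finset.coe_filter, Finset.mem_range]
  exact ⟨fun ⟨k, hk, hk'⟩ => hk' ▸ ⟨k.isLt, hk⟩,
    fun ⟨hk, hp⟩ => ⟨⟨k, hk⟩, hp, rfl⟩⟩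

theorem conj_comp_ne_zero_iff {α : Type*} {f : α → ℂ} :
    (fun x => starRingEnd ℂ (f x)) ≠ 0 ↔ f ≠ 0 := by
  simp [funext_iff]

theorem coord_ne_zero (k : ℕ) : (fun x : ℕ → ℂ => x k) ≠ 0 :=
  fun h => (one_ne_zero : (1 : ℂ) ≠ 0) (congrFun h 1)

theorem neg_conj_coord_ne_zero (k : ℕ) : (fun x : ℕ → ℂ => -starRingEnd ℂ (x k)) ≠ 0 :=
  fun h => (one_ne_zero : (1 : ℂ) ≠ 0) (by simpa using congrFun h 1)

section

variable {a i j : ℕ}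

theorem Gmat_succ_ne_zero_iff_of_lt (hi : i < 2 ^ a) (hj : j < 2 ^ a) :
    Gmat (a + 1) i j ≠ 0 ↔ Gmat a i j ≠ 0 := by
  simp [Gmat, hi, hj]

theorem Gmat_succ_add_right_ne_zero_iff (hi : i < 2 ^ a) :
    Gmat (a + 1) i (2 ^ a + j) ≠ 0 ↔ j = i := by
  simp [Gmat, hi, add_comm, neg_conj_coord_ne_zero]

theorem Gmat_succ_add_left_ne_zero_iff (hj : j < 2 ^ a) :
    Gmat (a + 1) (2 ^ a + i) j ≠ 0 ↔ j = i := by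
  simp [Gmat, hj, add_comm, coord_ne_zero, eq_comm]

theorem Gmat_succ_add_add_ne_zero_iff :
    Gmat (a + 1) (2 ^ a + i) (2 ^ a + j) ≠ 0 ↔ Gmat a j i ≠ 0 := by
  simp [Gmat, conj_comp_ne_zero_iff]

end

theorem Gmat_ne_zero_comm : ∀ {a i j : ℕ}, Gmat a i j ≠ 0 ↔ Gmat a j i ≠ 0
  | 0, i, j => by simp only [Gmat, and_comm]
  | a + 1, i, j => by
    rcases Nat.lt_or_exists_eq_add i (2 ^ a) with hi | ⟨i, rfl⟩ <;>
      rcases Nat.lt_or_exists_eq_add j (2 ^ a) with hj | ⟨j, rfl⟩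
    · rw [Gmat_succ_ne_zero_iff_of_lt hi hj, Gmat_succ_ne_zero_iff_of_lt hj hi, Gmat_ne_zero_comm]
    · rw [Gmat_succ_add_right_ne_zero_iff hi, Gmat_succ_add_left_ne_zero_iff hi, eq_comm]
    · rw [Gmat_succ_add_left_ne_zero_iff hj, Gmat_succ_add_right_ne_zero_iff hj, eq_comm]
    · rw [Gmat_succ_add_add_ne_zero_iff, Gmat_succ_add_add_ne_zero_iff, Gmat_ne_zero_comm]

theorem count_Gmat_row_ne_zero :
    ∀ {a i : ℕ}, i < 2 ^ a → Nat.count (Gmat a i · ≠ 0) (2 ^ a) = a + 1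
  | 0, i, hi => by
    obtain rfl : i = 0 := by simpa using hi
    simp [Gmat, Nat.count_one, coord_ne_zero]
  | a + 1, i, hi => by
    rw [pow_succ, mul_two, Nat.count_add]
    rcases Nat.lt_or_exists_eq_add i (2 ^ a) with hi | ⟨i, rfl⟩
    · calc Nat.count (Gmat (a + 1) i · ≠ 0) (2 ^ a)
            + Nat.count (fun j => Gmat (a + 1) i (2 ^ a + j) ≠ 0) (2 ^ a)
          _ = Nat.count (Gmat a i · ≠ 0) (2 ^ a) + Nat.count (· = i) (2 ^ a) := by
            rw [Nat.count_congr_of_lt fun j hj => Gmat_succ_ne_zero_iff_of_lt hi hj,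
              Nat.count_congr_of_lt fun j _ => Gmat_succ_add_right_ne_zero_iff hi]
          _ = a + 1 + 1 := by rw [count_Gmat_row_ne_zero hi, Nat.count_eq_one_of_lt hi]
    · have hi : i < 2 ^ a := by rw [pow_succ] at hi; omega
      calc Nat.count (Gmat (a + 1) (2 ^ a + i) · ≠ 0) (2 ^ a)
            + Nat.count (fun j => Gmat (a + 1) (2 ^ a + i) (2 ^ a + j) ≠ 0) (2 ^ a)
          _ = Nat.count (· = i) (2 ^ a) + Nat.count (Gmat a i · ≠ 0) (2 ^ a) := by
            rw [Nat.count_congr_of_lt fun j hj => Gmat_succ_add_left_ne_zero_iff hj,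
              Nat.count_congr_of_lt fun j _ =>
                Gmat_succ_add_add_ne_zero_iff.trans Gmat_ne_zero_comm]
          _ = a + 1 + 1 := by
            rw [Nat.count_eq_one_of_lt hi, count_Gmat_row_ne_zero hi, add_comm]

theorem rows_cols_nonzero_Gmat_general (a : ℕ) :
    (∀ i : Fin (2 ^ a),
        Set.ncard {j : Fin (2 ^ a) | Gmat a (i : ℕ) (j : ℕ) ≠ 0} = a + 1) ∧
    (∀ j : Fin (2 ^ a),
        Set.ncard {i : Fin (2 ^ a) | Gmat a (i : ℕ) (j : ℕ) ≠ 0} = a + 1) := by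
  refine ⟨fun i => ?_, fun j => ?_⟩
  · exact (Set.ncard_setOf_fin_eq_count _ (Gmat a i · ≠ 0)).trans
      (count_Gmat_row_ne_zero i.isLt)
  · calc Set.ncard {i : Fin (2 ^ a) | Gmat a i j ≠ 0}
        _ = Set.ncard {i : Fin (2 ^ a) | Gmat a j i ≠ 0} :=
          congrArg _ (Set.ext fun _ => Gmat_ne_zero_comm)
        _ = a + 1 :=
          (Set.ncard_setOf_fin_eq_count _ (Gmat a j · ≠ 0)).trans (count_Gmat_row_ne_zero j.isLt)

/-- each row and each column of `G_a` contains exactly `a+1`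
non-zero entries. -/
theorem rows_cols_nonzero_Gmat (a : ℕ) (ha : 1 ≤ a) :
    (∀ i : Fin (2 ^ a),
        Set.ncard {j : Fin (2 ^ a) | Gmat a (i : ℕ) (j : ℕ) ≠ 0} = a + 1) ∧
    (∀ j : Fin (2 ^ a),
        Set.ncard {i : Fin (2 ^ a) | Gmat a (i : ℕ) (j : ℕ) ≠ 0} = a + 1) :=
  rows_cols_nonzero_Gmat_general a
end

section
/- Let a ≥ 2, b = ⌊log_2 a⌋ + 1, m = 2^b - a - 1, q = a - 2^{b-1}, M_a = {x : 0 < x ≤ a, x not a power of 2}, and g(x) = 2x if the (b-1)-th bit of x is 0, else 2x + 1 - 2^b. Let M̃_a = g(M_a). If a ∉ {2^b - 2, 2^b - 1}, then M̃_a \ M_a = {2⌈(a+1)/2⌉, 2(⌈(a+1)/2⌉+1), ..., 2(2^{b-1}-1)} and M_a \ M̃_a = {2q+3, 2q+5, ..., 2⌈a/2⌉ - 1}. -/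
open scoped Classical

noncomputable section

/-- `b = ⌊log₂ a⌋ + 1`. -/
def bb (a : ℕ) : ℕ := Nat.log 2 a + 1

/-- `m = 2^b - a - 1`. -/
def mm (a : ℕ) : ℕ := 2 ^ bb a - a - 1

/-- `q = a - 2^(b-1)`. -/
def qq (a : ℕ) : ℕ := a - 2 ^ (bb a - 1)

/-- `M_a = {x : 0 < x ≤ a, x is not a power of 2}`. -/
def Ma (a : ℕ) : Set ℕ := {x | 0 < x ∧ x ≤ a ∧ ¬ ∃ k, x = 2 ^ k}

/-- `g(x) = 2x` if bit `b-1` of `x` is `0`, else `g(x) = 2x + 1 - 2^b`. -/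
def gg (a x : ℕ) : ℕ := if x.testBit (bb a - 1) then 2 * x + 1 - 2 ^ bb a else 2 * x

/-- `f'(x) = x` if `x ∈ M_a`, else `f'(x) = x + 1 - 2⌈m/2⌉` (intended domain `g(M_a)`). -/
def ff' (a x : ℕ) : ℕ := if x ∈ Ma a then x else x + 1 - 2 * ((mm a + 1) / 2)

/-- `f = f' ∘ g`. -/
def ff (a x : ℕ) : ℕ := ff' a (gg a x)

/-- the `j`-th binary digit of `x`, as a natural number. -/
def bitv (x j : ℕ) : ℕ := if x.testBit j then 1 else 0

/-- `h(x) = 2^(f(x)-1) + Σ_{j=0}^{b-2} x_j 2^(2^(j+1)-1) + x_{b-1}`. -/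
def hh (a x : ℕ) : ℕ :=
  2 ^ (ff a x - 1) + (∑ j ∈ Finset.range (bb a - 1), bitv x j * 2 ^ (2 ^ (j + 1) - 1)) +
    bitv x (bb a - 1)

/-- Hamming weight of `x` viewed as a vector in `F_2^a`. -/
def wt (a x : ℕ) : ℕ := ((Finset.range a).filter (fun j => x.testBit j)).card

/-- identification of `Z_{2^a}` with `F_2^a` via radix-2 representation. -/
def toVec (a x : ℕ) : Fin a → ZMod 2 := fun j => if x.testBit (j : ℕ) then 1 else 0

/-- `S`, the `F_2`-span of `M_a' = h(M_a)` inside `F_2^a`. -/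
def Ssub (a : ℕ) : Submodule (ZMod 2) (Fin a → ZMod 2) :=
  Submodule.span (ZMod 2) (toVec a '' (hh a '' Ma a))

/-- `P_a = {0, 2^0, 2^1, …, 2^(a-1)}`. -/
def Pa (a : ℕ) : Set ℕ := {0} ∪ {y | ∃ j < a, y = 2 ^ j}

/-- `Q_a = ∅` if `a+1` is a power of `2`, else `{1 ⊕ 2^j : a-m ≤ j ≤ a-1}`. -/
def Qa (a : ℕ) : Set ℕ :=
  if ∃ k, a + 1 = 2 ^ k then ∅ else {y | ∃ j, a - mm a ≤ j ∧ j < a ∧ y = 1 ^^^ 2 ^ j}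

/-- `T_a = P_a ∪ Q_a`. -/
def Ta (a : ℕ) : Set ℕ := Pa a ∪ Qa a

end

/-!
Write `P = 2^(b-1)`, so that `P ≤ a < 2P`. On `x < P` the map `g` is doubling, and on
`P ≤ x < 2P` it is `P + r ↦ 2r + 1`. Hence `g(M_a)` consists of the doubles `2x` of the
non-powers of two `0 < x < P`, together with the odd numbers `2r + 1` with `1 ≤ r ≤ q`
(all of `(P, a]` lies in `M_a`, since there is no power of two strictly between `P` and `2P`).
Comparing this with `M_a` parity by parity gives both differences: the double `2x` of a
non-power of two lies outside `M_a` exactly when `2x > a`, and no power of two lies in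
`(a/2, P)` because its double would lie in `(a, 2P)`.
-/

theorem not_exists_eq_two_pow_of_lt_of_lt {n x : ℕ} (h1 : 2 ^ n < x) (h2 : x < 2 ^ (n + 1)) :
    ¬ ∃ k, x = 2 ^ k := by
  rintro ⟨k, rfl⟩
  have := (Nat.pow_lt_pow_iff_right one_lt_two).1 h1
  have := (Nat.pow_lt_pow_iff_right one_lt_two).1 h2
  omega

theorem exists_two_mul_eq_two_pow_iff (x : ℕ) :
    (∃ k, 2 * x = 2 ^ k) ↔ ∃ k, x = 2 ^ k := by
  constructor
  · rintro ⟨_ | k, hk⟩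
    · omega
    · exact ⟨k, by rw [pow_succ] at hk; omega⟩
  · rintro ⟨k, rfl⟩
    exact ⟨k + 1, by rw [pow_succ, mul_comm]⟩

theorem exists_two_mul_add_one_eq_two_pow_iff (t : ℕ) :
    (∃ k, 2 * t + 1 = 2 ^ k) ↔ t = 0 := by
  constructor
  · rintro ⟨_ | k, hk⟩
    · omega
    · rw [pow_succ] at hk; omega
  · rintro rfl
    exact ⟨0, rfl⟩

theorem two_mul_add_one_notMem_image_two_mul (s : Set ℕ) (t : ℕ) :
    2 * t + 1 ∉ (fun x => 2 * x) '' s := by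
  rintro ⟨x, -, h⟩
  dsimp only at h
  omega

theorem two_mul_notMem_image_two_mul_add_one (s : Set ℕ) (t : ℕ) :
    2 * t ∉ (fun x => 2 * x + 1) '' s := by
  rintro ⟨x, -, h⟩
  dsimp only at h
  omega

theorem two_mul_add_one_injective : Function.Injective fun x : ℕ => 2 * x + 1 :=
  fun _ _ h => by dsimp only at h; omega

theorem Set.ext_of_two_mul_of_two_mul_add_one {s u : Set ℕ} (h0 : ∀ t, 2 * t ∈ s ↔ 2 * t ∈ u)
    (h1 : ∀ t, 2 * t + 1 ∈ s ↔ 2 * t + 1 ∈ u) : s = u := by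
  ext y
  obtain ⟨t, rfl | rfl⟩ := Nat.even_or_odd' y
  exacts [h0 t, h1 t]

section
variable {a : ℕ}

theorem two_pow_bb (a : ℕ) : 2 ^ bb a = 2 * 2 ^ (bb a - 1) := by
  rw [bb, Nat.add_sub_cancel, pow_succ, mul_comm]

theorem lt_two_mul_two_pow_bb_pred (a : ℕ) : a < 2 * 2 ^ (bb a - 1) :=
  two_pow_bb a ▸ Nat.lt_pow_succ_log_self one_lt_two a

theorem two_pow_bb_pred_le (ha : a ≠ 0) : 2 ^ (bb a - 1) ≤ a :=
  Nat.pow_log_le_self 2 ha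

theorem lt_two_pow_bb_pred_of_two_pow_bb_pred_add_le {r : ℕ} (h : 2 ^ (bb a - 1) + r ≤ a) :
    r < 2 ^ (bb a - 1) := by
  have := lt_two_mul_two_pow_bb_pred a
  omega

theorem gg_of_lt {x : ℕ} (hx : x < 2 ^ (bb a - 1)) : gg a x = 2 * x := by
  rw [gg, Nat.testBit_lt_two_pow hx, if_neg Bool.false_ne_true]

theorem gg_two_pow_add {r : ℕ} (hr : r < 2 ^ (bb a - 1)) :
    gg a (2 ^ (bb a - 1) + r) = 2 * r + 1 := by
  rw [gg, Nat.testBit_two_pow_add_eq, Nat.testBit_lt_two_pow hr, Bool.not_false, if_pos rfl,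
    two_pow_bb]
  omega

theorem Ma_mono : Monotone Ma :=
  fun _ _ h _ ⟨hx0, hxa, hxp⟩ => ⟨hx0, hxa.trans h, hxp⟩

theorem two_mul_mem_Ma_iff (x : ℕ) : 2 * x ∈ Ma a ↔ x ∈ Ma (a / 2) := by
  simp only [Ma, Set.mem_ofPred_eq, exists_two_mul_eq_two_pow_iff]
  exact and_congr (by omega) (and_congr_left' (by omega))

theorem two_mul_add_one_mem_Ma_iff (t : ℕ) : 2 * t + 1 ∈ Ma a ↔ 0 < t ∧ 2 * t + 1 ≤ a := by
  simp only [Ma, Set.mem_ofPred_eq, exists_two_mul_add_one_eq_two_pow_iff]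
  omega

theorem mem_Ma_of_two_pow_bb_pred_lt {x : ℕ} (h1 : 2 ^ (bb a - 1) < x) (h2 : x ≤ a) :
    x ∈ Ma a := by
  refine ⟨Nat.zero_lt_of_lt h1, h2, not_exists_eq_two_pow_of_lt_of_lt h1 ?_⟩
  have := lt_two_mul_two_pow_bb_pred a
  rw [pow_succ]
  omega

theorem Ma_two_pow_bb_pred_sub_one_sdiff_Ma_half (ha : a ≠ 0) :
    Ma (2 ^ (bb a - 1) - 1) \ Ma (a / 2) = Set.Icc ((a + 2) / 2) (2 ^ (bb a - 1) - 1) := by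
  have hPa := two_pow_bb_pred_le ha
  have haP := lt_two_mul_two_pow_bb_pred a
  ext t
  simp only [Set.mem_sdiff, Set.mem_Icc, Ma, Set.mem_ofPred_eq]
  constructor
  · rintro ⟨⟨ht0, htP, htp⟩, hnot⟩
    refine ⟨?_, htP⟩
    by_contra h
    exact hnot ⟨ht0, by omega, htp⟩
  · rintro ⟨hat, htP⟩
    refine ⟨⟨by omega, htP, ?_⟩, fun h => by omega⟩
    -- `2t` lies strictly between `2^(b-1)` and `2^b`
    rw [← exists_two_mul_eq_two_pow_iff]
    exact not_exists_eq_two_pow_of_lt_of_lt (n := bb a - 1) (by omega) (by rw [pow_succ]; omega)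

theorem two_mul_mem_image_gg_iff (ha : a ≠ 0) (x : ℕ) :
    2 * x ∈ gg a '' Ma a ↔ x ∈ Ma (2 ^ (bb a - 1) - 1) := by
  have hPa := two_pow_bb_pred_le ha
  constructor
  · rintro ⟨z, hz, hgz⟩
    obtain hzP | hPz := lt_or_ge z (2 ^ (bb a - 1))
    · rw [gg_of_lt hzP] at hgz
      obtain rfl : z = x := by omega
      exact ⟨hz.1, by omega, hz.2.2⟩
    · obtain ⟨r, rfl⟩ := Nat.exists_eq_add_of_le hPz
      rw [gg_two_pow_add (lt_two_pow_bb_pred_of_two_pow_bb_pred_add_le hz.2.1)] at hgz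
      omega
  · rintro ⟨hx0, hxP, hxp⟩
    exact ⟨x, ⟨hx0, by omega, hxp⟩, gg_of_lt (by omega)⟩

theorem two_mul_add_one_mem_image_gg_iff (t : ℕ) :
    2 * t + 1 ∈ gg a '' Ma a ↔ 0 < t ∧ t ≤ qq a := by
  constructor
  · rintro ⟨z, hz, hgz⟩
    obtain hzP | hPz := lt_or_ge z (2 ^ (bb a - 1))
    · rw [gg_of_lt hzP] at hgz
      omega
    · obtain ⟨r, rfl⟩ := Nat.exists_eq_add_of_le hPz
      rw [gg_two_pow_add (lt_two_pow_bb_pred_of_two_pow_bb_pred_add_le hz.2.1)] at hgz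
      have hr : r ≠ 0 := by
        rintro rfl
        exact hz.2.2 ⟨bb a - 1, rfl⟩
      have := hz.2.1
      rw [qq]
      omega
  · rintro ⟨ht0, htq⟩
    rw [qq] at htq
    refine ⟨2 ^ (bb a - 1) + t, mem_Ma_of_two_pow_bb_pred_lt (by omega) (by omega), ?_⟩
    exact gg_two_pow_add (lt_two_pow_bb_pred_of_two_pow_bb_pred_add_le (by omega))

end

theorem Ha_Ja_description_general (a : ℕ) (ha : 2 ≤ a) :
    (gg a '' Ma a) \ Ma a = (fun t => 2 * t) '' Set.Icc ((a + 2) / 2) (2 ^ (bb a - 1) - 1) ∧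
    Ma a \ (gg a '' Ma a) = (fun t => 2 * t + 1) '' Set.Icc (qq a + 1) ((a + 1) / 2 - 1) := by
  have ha0 : a ≠ 0 := by omega
  have haP := lt_two_mul_two_pow_bb_pred a
  have hq : qq a = a - 2 ^ (bb a - 1) := rfl
  refine ⟨Set.ext_of_two_mul_of_two_mul_add_one (fun t => ?_) (fun t => ?_),
    Set.ext_of_two_mul_of_two_mul_add_one (fun t => ?_) (fun t => ?_)⟩
  · rw [Set.mem_sdiff, two_mul_mem_image_gg_iff ha0, two_mul_mem_Ma_iff, ← Set.mem_sdiff,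
      Ma_two_pow_bb_pred_sub_one_sdiff_Ma_half ha0,
      (mul_right_injective₀ two_ne_zero).mem_set_image]
  · simp only [Set.mem_sdiff, two_mul_add_one_mem_image_gg_iff, two_mul_add_one_mem_Ma_iff,
      two_mul_add_one_notMem_image_two_mul, iff_false]
    omega
  · simp only [Set.mem_sdiff, two_mul_mem_image_gg_iff ha0, two_mul_mem_Ma_iff,
      two_mul_notMem_image_two_mul_add_one, iff_false, not_and_not_right]
    exact fun h => Ma_mono (by omega) h
  · rw [Set.mem_sdiff, two_mul_add_one_mem_image_gg_iff, two_mul_add_one_mem_Ma_iff,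
      two_mul_add_one_injective.mem_set_image, Set.mem_Icc]
    omega

/-- if `a ∉ {2^b - 2, 2^b - 1}` then
`g(M_a) \ M_a = {2⌈(a+1)/2⌉, …, 2(2^(b-1)-1)}` and
`M_a \ g(M_a) = {2q+3, 2q+5, …, 2⌈a/2⌉-1}`. -/
theorem Ha_Ja_description (a : ℕ) (ha : 2 ≤ a)
    (h1 : a ≠ 2 ^ bb a - 2) (h2 : a ≠ 2 ^ bb a - 1) :
    (gg a '' Ma a) \ Ma a = (fun t => 2 * t) '' Set.Icc ((a + 2) / 2) (2 ^ (bb a - 1) - 1) ∧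
    Ma a \ (gg a '' Ma a) = (fun t => 2 * t + 1) '' Set.Icc (qq a + 1) ((a + 1) / 2 - 1) :=
  Ha_Ja_description_general a ha
end

section
/- Define h : M_a → Z_{2^a} by h(x) = 2^{f(x)-1} + Σ_{j=0}^{b-2} x_j 2^{2^{j+1}-1} + x_{b-1}, where x = Σ_{j=0}^{b-1} x_j 2^j and f is the bijection of M_a. Then h is injective, and the Hamming weight of h(x) (as a vector in F_2^a) equals 1 + (Hamming weight of x) for all x ∈ M_a. -/
open scoped Classical

/-!
The binary digits of `h(x)` sit at the position `f(x) - 1` and at the positions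
`2^((j+1) mod b) - 1` for the digits `j < b` of `x` equal to `1`. Since `f(x)` is not a power
of `2` and `j ↦ 2^((j+1) mod b) - 1` is injective on `{0, …, b-1}`, these positions are pairwise
distinct: `h(x)` has exactly `1 + ‖x‖` ones, and every digit of `x` can be read off from `h(x)`.
That `f(x)` lies in `M_a` comes from a case analysis on the top digit of `x` and on whether
`2x ≤ a`: in every case `f(x)` is either `2x` or an odd number in `[3, a]`.
-/

open Finset

namespace Nat

theorem testBit_sum_two_pow (s : Finset ℕ) (j : ℕ) : (∑ i ∈ s, 2 ^ i).testBit j ↔ j ∈ s := by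
  rw [← mem_bitIndices, ← List.mem_toFinset, Finset.toFinset_bitIndices_sum_two_pow]

theorem card_filter_testBit_sum_two_pow {s : Finset ℕ} {n : ℕ} (hs : s ⊆ range n) :
    #((range n).filter fun j => (∑ i ∈ s, 2 ^ i).testBit j) = #s := by
  simp_rw [testBit_sum_two_pow, filter_mem_eq_inter, inter_eq_right.2 hs]

theorem filter_testBit_range_of_lt_two_pow {x m n : ℕ} (hx : x < 2 ^ m) (hmn : m ≤ n) :
    (range n).filter (fun j => x.testBit j) = (range m).filter fun j => x.testBit j := by
  ext j
  simp only [mem_filter, mem_range]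
  refine ⟨fun ⟨_, hj⟩ => ⟨?_, hj⟩, fun ⟨hj, hb⟩ => ⟨by omega, hb⟩⟩
  by_contra! hmj
  have := testBit_lt_two_pow (hx.trans_le (pow_le_pow_right₀ one_le_two hmj))
  simp_all

theorem eq_of_testBit_eq_of_lt_two_pow {x y m : ℕ} (hx : x < 2 ^ m) (hy : y < 2 ^ m)
    (h : ∀ j < m, x.testBit j = y.testBit j) : x = y := by
  refine eq_of_testBit_eq fun j => ?_
  by_cases hj : j < m
  · exact h j hj
  · have hm : 2 ^ m ≤ 2 ^ j := pow_le_pow_right₀ one_le_two (not_lt.1 hj)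
    rw [testBit_lt_two_pow (hx.trans_le hm), testBit_lt_two_pow (hy.trans_le hm)]

theorem ne_two_pow_of_odd {y : ℕ} (hy : Odd y) (h1 : 1 < y) (k : ℕ) : y ≠ 2 ^ k := by
  rintro rfl
  cases k with
  | zero => simp at h1
  | succ k => exact not_even_iff_odd.2 hy (even_pow.2 ⟨even_two, k.succ_ne_zero⟩)

end Nat

section Ma

variable {a x : ℕ}

theorem ne_zero_of_mem_Ma (hx : x ∈ Ma a) : a ≠ 0 := by
  have := hx.1; have := hx.2.1; omega

theorem lt_two_pow_bb_of_mem_Ma (hx : x ∈ Ma a) : x < 2 ^ bb a :=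
  hx.2.1.trans_lt (Nat.lt_pow_succ_log_self one_lt_two a)

theorem mem_Ma_of_odd (hx : Odd x) (h1 : 1 < x) (hxa : x ≤ a) : x ∈ Ma a :=
  ⟨by omega, hxa, fun ⟨k, hk⟩ => Nat.ne_two_pow_of_odd hx h1 k hk⟩

theorem two_mul_mem_Ma (hx : x ∈ Ma a) (h2x : 2 * x ≤ a) : 2 * x ∈ Ma a := by
  obtain ⟨hx0, -, hxp⟩ := hx
  refine ⟨by omega, h2x, fun ⟨k, hk⟩ => ?_⟩
  cases k with
  | zero => omega
  | succ k => exact hxp ⟨k, by rw [pow_succ] at hk; omega⟩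

theorem ff_mem_Ma (hx : x ∈ Ma a) : ff a x ∈ Ma a := by
  set n := Nat.log 2 a
  have hn : 2 ^ n ≤ a := Nat.pow_log_le_self 2 (ne_zero_of_mem_Ma hx)
  have hxn : x < 2 ^ (n + 1) := lt_two_pow_bb_of_mem_Ma hx
  have hbb : bb a = n + 1 := rfl
  have ⟨hx0, hxa, hxp⟩ := hx
  rw [pow_succ] at hxn
  rw [ff, gg, hbb, Nat.add_sub_cancel, pow_succ]
  split_ifs with htop
  · have hnx : 2 ^ n < x :=
      (Nat.ge_two_pow_of_testBit htop).lt_of_ne fun h => hxp ⟨n, h.symm⟩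
    have hg : 2 * x + 1 - 2 ^ n * 2 ∈ Ma a :=
      mem_Ma_of_odd ⟨x - 2 ^ n, by omega⟩ (by omega) (by omega)
    rwa [ff', if_pos hg]
  · have hxn' : x < 2 ^ n := by
      by_contra! h
      exact htop (Nat.testBit_of_two_pow_le_and_two_pow_add_one_gt h (by rwa [pow_succ]))
    by_cases h2x : 2 * x ≤ a
    · have hg := two_mul_mem_Ma hx h2x
      rwa [ff', if_pos hg]
    · rw [ff', if_neg fun h => h2x h.2.1, mm, hbb, pow_succ]
      -- `2 * ((m + 1) / 2)` is `m` or `m + 1`, where `m = 2^b - a - 1`: this keeps the value in `[3, a]`.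
      exact mem_Ma_of_odd ⟨x - (2 ^ n * 2 - a - 1 + 1) / 2, by omega⟩ (by omega) (by omega)

end Ma

/-- Bit `j < b - 1` of `x` is sent to bit `2^(j+1) - 1` of `h(x)`, and bit `b - 1` to bit `0`. -/
def hhPos (a j : ℕ) : ℕ := 2 ^ ((j + 1) % bb a) - 1

theorem hhPos_injOn (a : ℕ) : Set.InjOn (hhPos a) (range (bb a)) := by
  intro i hi j hj hij
  have hmod : (i + 1) % bb a = (j + 1) % bb a :=
    Nat.pow_right_injective le_rfl <| by
      have := Nat.one_le_two_pow (n := (i + 1) % bb a)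
      have := Nat.one_le_two_pow (n := (j + 1) % bb a)
      simp only [hhPos] at hij ⊢
      omega
  exact Nat.ModEq.eq_of_lt_of_lt (Nat.ModEq.add_right_cancel' 1 hmod)
    (mem_range.1 hi) (mem_range.1 hj)

theorem hhPos_injOn_filter_testBit (a x : ℕ) :
    Set.InjOn (hhPos a) ((range (bb a)).filter fun j => x.testBit j) :=
  (hhPos_injOn a).mono (coe_subset.2 (filter_subset _ _))

theorem hh_eq_sum_hhPos (a x : ℕ) :
    hh a x =
      2 ^ (ff a x - 1) + ∑ j ∈ (range (bb a)).filter (fun j => x.testBit j), 2 ^ hhPos a j := by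
  have hbb : bb a = Nat.log 2 a + 1 := rfl
  have hhPos_of_lt_log (j : ℕ) (hj : j < Nat.log 2 a) : hhPos a j = 2 ^ (j + 1) - 1 := by
    rw [hhPos, Nat.mod_eq_of_lt (by omega)]
  rw [hh, add_assoc, sum_filter, hbb, sum_range_succ, Nat.add_sub_cancel]
  congr 2
  · refine sum_congr rfl fun j hj => ?_
    rw [bitv, hhPos_of_lt_log j (mem_range.1 hj), ite_mul, one_mul, zero_mul]
  · simp [bitv, hhPos, hbb]

section Support

variable {a x : ℕ}

theorem hhPos_lt (ha : a ≠ 0) (j : ℕ) : hhPos a j < a := by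
  have hlt : (j + 1) % bb a < Nat.log 2 a + 1 := Nat.mod_lt _ (Nat.succ_pos _)
  have := Nat.pow_le_pow_right two_pos (Nat.lt_succ_iff.1 hlt)
  have := Nat.pow_log_le_self 2 ha
  have := Nat.one_le_two_pow (n := (j + 1) % bb a)
  rw [hhPos]
  omega

theorem hhPos_ne_ff_sub_one (hx : x ∈ Ma a) (j : ℕ) : hhPos a j ≠ ff a x - 1 := by
  obtain ⟨hf0, -, hfp⟩ := ff_mem_Ma hx
  have := Nat.one_le_two_pow (n := (j + 1) % bb a)
  exact fun hj => hfp ⟨(j + 1) % bb a, by rw [hhPos] at hj; omega⟩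

theorem ff_sub_one_notMem_image_hhPos (hx : x ∈ Ma a) (s : Finset ℕ) :
    ff a x - 1 ∉ s.image (hhPos a) := fun h =>
  let ⟨j, _, hj⟩ := mem_image.1 h
  hhPos_ne_ff_sub_one hx j hj

noncomputable def hhSupport (a x : ℕ) : Finset ℕ :=
  insert (ff a x - 1) (((range (bb a)).filter fun j => x.testBit j).image (hhPos a))

theorem hh_eq_sum_hhSupport (hx : x ∈ Ma a) : hh a x = ∑ i ∈ hhSupport a x, 2 ^ i := by
  rw [hhSupport, sum_insert (ff_sub_one_notMem_image_hhPos hx _),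
    sum_image (hhPos_injOn_filter_testBit a x), hh_eq_sum_hhPos]

theorem testBit_hh_hhPos (hx : x ∈ Ma a) {j : ℕ} (hj : j < bb a) :
    (hh a x).testBit (hhPos a j) = x.testBit j := by
  rw [Bool.eq_iff_iff, hh_eq_sum_hhSupport hx, Nat.testBit_sum_two_pow, hhSupport, mem_insert,
    ← mem_coe, coe_image, (hhPos_injOn a).mem_image_iff (coe_subset.2 (filter_subset _ _))
      (mem_range.2 hj), mem_coe, mem_filter, or_iff_right (hhPos_ne_ff_sub_one hx j)]
  exact and_iff_right (mem_range.2 hj)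

theorem hhSupport_subset_range (hx : x ∈ Ma a) : hhSupport a x ⊆ range a := by
  obtain ⟨hf0, hfa, -⟩ := ff_mem_Ma hx
  simp only [hhSupport, insert_subset_iff, mem_range, image_subset_iff]
  exact ⟨by omega, fun j _ => hhPos_lt (ne_zero_of_mem_Ma hx) j⟩

theorem card_hhSupport (hx : x ∈ Ma a) : #(hhSupport a x) = 1 + wt a x := by
  rw [hhSupport, card_insert_of_notMem (ff_sub_one_notMem_image_hhPos hx _),
    card_image_of_injOn (hhPos_injOn_filter_testBit a x), wt,
    Nat.filter_testBit_range_of_lt_two_pow (lt_two_pow_bb_of_mem_Ma hx)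
      (Nat.log_lt_self 2 (ne_zero_of_mem_Ma hx)), add_comm]

end Support

theorem h_injective_weight_general (a : ℕ) :
    Set.InjOn (hh a) (Ma a) ∧ ∀ x ∈ Ma a, wt a (hh a x) = 1 + wt a x := by
  refine ⟨fun x hx y hy hxy => ?_, fun x hx => ?_⟩
  · refine Nat.eq_of_testBit_eq_of_lt_two_pow (lt_two_pow_bb_of_mem_Ma hx)
      (lt_two_pow_bb_of_mem_Ma hy) fun j hj => ?_
    rw [← testBit_hh_hhPos hx hj, ← testBit_hh_hhPos hy hj, hxy]
  · rw [hh_eq_sum_hhSupport hx, wt, Nat.card_filter_testBit_sum_two_pow (hhSupport_subset_range hx),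
      card_hhSupport hx]

/-- `h` is injective on `M_a`, and the Hamming weight of `h(x)`
(in `F_2^a`) equals `1 + ‖x‖` for all `x ∈ M_a`. -/
theorem h_injective_weight (a : ℕ) (ha : 2 ≤ a) :
    Set.InjOn (hh a) (Ma a) ∧ ∀ x ∈ Ma a, wt a (hh a x) = 1 + wt a x :=
  h_injective_weight_general a
end

section
/- Let a be a positive integer and b the unique integer with 2^{b-1} ≤ a < 2^b. Then Z_{2^a} can be partitioned into 2^b subsets C_0, ..., C_{2^b - 1}, each of cardinality 2^{a-b}, such that for any two distinct elements x, y lying in the same subset C_j, the translates x ⊕ T_a and y ⊕ T_a are disjoint. -/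
open scoped Classical

/-!
Identify `x < 2 ^ a` with its bit vector in `𝔽₂ᵃ`, so that `⊕` becomes addition. Let
`L = codeMap a : 𝔽₂ᵃ → 𝔽₂ᵇ` send `e_j` to the bits of `c_j = bitCode a j`, where
`c_0, …, c_{a-1}` are `1, …, a - m` followed by the even numbers `2 ^ b - 2m, …, 2 ^ b - 2`.
As `c_0 = 1`, the even `c_j` satisfy `L (e_0 + e_j) = c_j + 1`; since `2 ^ b = a + m + 1`, `L`
thus maps `T_a = {0} ∪ {e_j} ∪ {e_0 + e_j : j ≥ a - m}` bijectively onto `𝔽₂ᵇ ≅ {0, …, 2 ^ b - 1}`.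
Hence `L` is onto, and its fibres, the cosets of its kernel, have `2 ^ (a - b)` elements.
If `x + s = y + t` with `L x = L y` and `s, t ∈ T_a`, then `L s = L t`, so `s = t` and `x = y`.
-/

theorem eq_of_add_eq_add_of_injOn {G H F : Type*} [AddGroup G] [AddGroup H] [FunLike F G H]
    [AddMonoidHomClass F G H] {f : F} {T : Set G} (hT : Set.InjOn f T) {x y s t : G}
    (hxy : f x = f y) (hs : s ∈ T) (ht : t ∈ T) (h : x + s = y + t) : x = y := by
  have hst : f s = f t := add_left_cancel (a := f x) (by rw [← map_add, h, map_add, hxy])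
  rw [hT hs ht hst] at h
  exact add_right_cancel h

theorem LinearMap.natCard_preimage_singleton_of_surjective {K V W : Type*} [Field K]
    [AddCommGroup V] [Module K V] [FiniteDimensional K V] [AddCommGroup W] [Module K W]
    {f : V →ₗ[K] W} (hf : Function.Surjective f) (w : W) :
    Nat.card (f ⁻¹' {w}) = Nat.card K ^ (Module.finrank K V - Module.finrank K W) := by
  have hrange : Module.finrank K (LinearMap.range f) = Module.finrank K W := by
    rw [LinearMap.range_eq_top.2 hf, finrank_top]
  calc Nat.card (f ⁻¹' {w})
      = Nat.card (LinearMap.ker f) :=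
        Nat.card_congr (AddMonoidHom.fiberEquivKerOfSurjective (f := f.toAddMonoidHom) hf w)
    _ = Nat.card K ^ (Module.finrank K V - Module.finrank K W) := by
        rw [Module.natCard_eq_pow_finrank (K := K), ← f.finrank_range_add_finrank_ker, hrange,
          Nat.add_sub_cancel_left]

theorem Set.BijOn.ncard_inter_preimage {α β : Type*} {e : α → β} {s : Set α}
    (he : Set.BijOn e s Set.univ) (S : Set β) : (s ∩ e ⁻¹' S).ncard = S.ncard := by
  rw [← (he.injOn.mono Set.inter_subset_left).ncard_image, Set.image_inter_preimage,
    he.image_eq, Set.univ_inter]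

theorem toVec_zero (n : ℕ) : toVec n 0 = 0 := by
  funext j
  simp [toVec]

theorem toVec_xor (n x y : ℕ) : toVec n (x ^^^ y) = toVec n x + toVec n y := by
  funext j
  simp only [toVec, Pi.add_apply, Nat.testBit_xor]
  cases x.testBit j <;> cases y.testBit j <;> decide

theorem toVec_two_pow {n j : ℕ} (hj : j < n) : toVec n (2 ^ j) = Pi.single ⟨j, hj⟩ 1 := by
  funext i
  simp only [toVec, Nat.testBit_two_pow, Pi.single_apply, Fin.ext_iff, eq_comm (a := j)]
  simp

theorem toVec_eq_finFunctionFinEquiv_symm {n x : ℕ} (hx : x < 2 ^ n) :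
    toVec n x = finFunctionFinEquiv.symm ⟨x, hx⟩ := by
  funext j
  apply Fin.ext
  rw [finFunctionFinEquiv_symm_apply_val]
  simp only [toVec, Nat.testBit_eq_decide_div_mod_eq]
  split_ifs with h <;> simp at h ⊢ <;> omega

theorem toVec_bijOn (n : ℕ) : Set.BijOn (toVec n) (Set.Iio (2 ^ n)) Set.univ := by
  refine ⟨Set.mapsTo_univ _ _, fun x hx y hy h => ?_, fun v _ => ?_⟩
  · rw [toVec_eq_finFunctionFinEquiv_symm hx, toVec_eq_finFunctionFinEquiv_symm hy] at h
    exact Fin.mk.inj_iff.1 (finFunctionFinEquiv.symm.injective h)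
  · refine ⟨finFunctionFinEquiv (m := 2) v, (finFunctionFinEquiv v).isLt, ?_⟩
    rw [toVec_eq_finFunctionFinEquiv_symm (finFunctionFinEquiv v).isLt]
    exact finFunctionFinEquiv.symm_apply_apply v

theorem two_pow_bb_eq (a : ℕ) : 2 ^ bb a = a + mm a + 1 := by
  have := Nat.lt_pow_succ_log_self one_lt_two a
  unfold mm bb
  omega

theorem two_pow_bb_eq_two_mul (a : ℕ) : 2 ^ bb a = 2 * 2 ^ Nat.log 2 a := by
  rw [bb, pow_succ']

theorem mm_lt {a : ℕ} (ha : 1 ≤ a) : mm a < a := by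
  have := Nat.pow_log_le_self 2 (Nat.one_le_iff_ne_zero.1 ha)
  have := two_pow_bb_eq a
  have := two_pow_bb_eq_two_mul a
  omega

def bitCode (a j : ℕ) : ℕ := if j < a - mm a then j + 1 else 2 ^ bb a - 2 * (a - j)

-- Inverts `0 ↦ 0`, `2 ^ j ↦ c_j` and `1 ^^^ 2 ^ j ↦ c_j + 1` (for `j ≥ a - m`).
def decode (a n : ℕ) : ℕ :=
  if n = 0 then 0
  else if n ≤ a - mm a then 2 ^ (n - 1)
  else if n % 2 = 0 then 2 ^ (a - (2 ^ bb a - n) / 2)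
  else 1 ^^^ 2 ^ (a - (2 ^ bb a - n + 1) / 2)

theorem bitCode_lt {a : ℕ} (ha : 1 ≤ a) {j : ℕ} (hj : j < a) : bitCode a j < 2 ^ bb a := by
  have := two_pow_bb_eq a; have := mm_lt ha
  unfold bitCode; split_ifs <;> omega

theorem decode_bitCode {a : ℕ} (ha : 1 ≤ a) {j : ℕ} (hj : j < a) :
    decode a (bitCode a j) = 2 ^ j := by
  have := two_pow_bb_eq a; have := two_pow_bb_eq_two_mul a; have := mm_lt ha
  unfold bitCode
  split_ifs with hj'
  · rw [decode, if_neg (by omega), if_pos (by omega), Nat.add_sub_cancel]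
  · rw [decode, if_neg (by omega), if_neg (by omega), if_pos (by omega)]
    congr 1; omega

theorem bitCode_add_one_lt {a : ℕ} (ha : 1 ≤ a) {j : ℕ} (hj : j < a) (hj' : a - mm a ≤ j) :
    bitCode a j + 1 < 2 ^ bb a := by
  have := two_pow_bb_eq a; have := two_pow_bb_eq_two_mul a; have := mm_lt ha
  rw [bitCode, if_neg (by omega)]
  omega

theorem decode_bitCode_add_one {a : ℕ} (ha : 1 ≤ a) {j : ℕ} (hj : j < a)
    (hj' : a - mm a ≤ j) :
    decode a (bitCode a j + 1) = 1 ^^^ 2 ^ j := by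
  have := two_pow_bb_eq a; have := two_pow_bb_eq_two_mul a; have := mm_lt ha
  rw [bitCode, if_neg (by omega), decode, if_neg (by omega), if_neg (by omega), if_neg (by omega)]
  congr 2; omega

theorem exists_decode_eq {a : ℕ} (ha : 1 ≤ a) {s : ℕ} (hs : s ∈ Ta a) :
    ∃ n < 2 ^ bb a, decode a n = s := by
  rcases hs with (rfl | ⟨j, hj, rfl⟩) | hq
  · exact ⟨0, Nat.two_pow_pos _, rfl⟩
  · exact ⟨bitCode a j, bitCode_lt ha hj, decode_bitCode ha hj⟩
  · rw [Qa] at hq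
    split_ifs at hq
    · exact hq.elim
    · obtain ⟨j, hj', hj, rfl⟩ := hq
      exact ⟨bitCode a j + 1, bitCode_add_one_lt ha hj hj', decode_bitCode_add_one ha hj hj'⟩

def codeMap (a : ℕ) : (Fin a → ZMod 2) →ₗ[ZMod 2] (Fin (bb a) → ZMod 2) :=
  Fintype.linearCombination (ZMod 2) fun j => toVec (bb a) (bitCode a j)

theorem codeMap_toVec_two_pow {a j : ℕ} (hj : j < a) :
    codeMap a (toVec a (2 ^ j)) = toVec (bb a) (bitCode a j) := by
  rw [codeMap, toVec_two_pow hj, Fintype.linearCombination_apply_single, one_smul]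

theorem codeMap_toVec_decode {a n : ℕ} (ha : 1 ≤ a) (hn : n < 2 ^ bb a) :
    codeMap a (toVec a (decode a n)) = toVec (bb a) n := by
  have := two_pow_bb_eq a; have := two_pow_bb_eq_two_mul a; have := mm_lt ha
  unfold decode
  split_ifs with h0 hsmall heven
  · rw [h0, toVec_zero, toVec_zero, map_zero]
  · rw [codeMap_toVec_two_pow (by omega), bitCode, if_pos (by omega)]
    congr 1; omega
  · rw [codeMap_toVec_two_pow (by omega), bitCode, if_neg (by omega)]
    congr 1; omega
  · have hbit0 : bitCode a 0 = 1 := if_pos (by omega)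
    set j := a - (2 ^ bb a - n + 1) / 2
    have hbitj : bitCode a j = n - 1 := by rw [bitCode, if_neg (by omega)]; omega
    rw [← pow_zero 2, toVec_xor, map_add, codeMap_toVec_two_pow (by omega),
      codeMap_toVec_two_pow (by omega), hbit0, hbitj, ← toVec_xor, Nat.xor_comm,
      Nat.xor_one_of_even (Nat.even_iff.2 (by omega))]
    congr 1; omega

theorem injOn_codeMap_toVec_Ta {a : ℕ} (ha : 1 ≤ a) :
    Set.InjOn (codeMap a) (toVec a '' Ta a) := by
  rintro _ ⟨s, hs, rfl⟩ _ ⟨t, ht, rfl⟩ h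
  obtain ⟨n, hn, rfl⟩ := exists_decode_eq ha hs
  obtain ⟨n', hn', rfl⟩ := exists_decode_eq ha ht
  rw [codeMap_toVec_decode ha hn, codeMap_toVec_decode ha hn'] at h
  rw [(toVec_bijOn _).injOn hn hn' h]

theorem codeMap_surjective {a : ℕ} (ha : 1 ≤ a) : Function.Surjective (codeMap a) := by
  intro w
  obtain ⟨n, hn, rfl⟩ := (toVec_bijOn (bb a)).surjOn (Set.mem_univ w)
  exact ⟨_, codeMap_toVec_decode ha hn⟩

theorem disjoint_xor_Ta_of_codeMap_eq {a : ℕ} (ha : 1 ≤ a) {x y : ℕ} (hx : x < 2 ^ a)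
    (hy : y < 2 ^ a) (hxy : x ≠ y) (h : codeMap a (toVec a x) = codeMap a (toVec a y)) :
    Disjoint ((fun t => x ^^^ t) '' Ta a) ((fun t => y ^^^ t) '' Ta a) := by
  rw [Set.disjoint_left]
  rintro _ ⟨s, hs, rfl⟩ ⟨t, ht, hst⟩
  apply hxy
  apply (toVec_bijOn a).injOn hx hy
  refine eq_of_add_eq_add_of_injOn (injOn_codeMap_toVec_Ta ha) h (s := toVec a s)
    (t := toVec a t) ⟨s, hs, rfl⟩ ⟨t, ht, rfl⟩ ?_
  rw [← toVec_xor, ← toVec_xor]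
  exact congrArg (toVec a) hst.symm

/-- `Z_{2^a}` can be partitioned into `2^b` subsets of size
`2^(a-b)` such that any two distinct elements of the same subset have disjoint
translates `x ⊕ T_a` and `y ⊕ T_a`. -/
theorem partition_exists (a : ℕ) (ha : 1 ≤ a) :
    ∃ C : Fin (2 ^ bb a) → Set ℕ,
      (∀ j k, j ≠ k → Disjoint (C j) (C k)) ∧
      (⋃ j, C j) = {x : ℕ | x < 2 ^ a} ∧
      (∀ j, (C j).ncard = 2 ^ (a - bb a)) ∧
      (∀ j, ∀ x ∈ C j, ∀ y ∈ C j, x ≠ y →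
        Disjoint ((fun t => x ^^^ t) '' Ta a) ((fun t => y ^^^ t) '' Ta a)) := by
  have hvec := toVec_bijOn a
  have hcode := toVec_bijOn (bb a)
  refine ⟨fun j => Set.Iio (2 ^ a) ∩ toVec a ⁻¹' (codeMap a ⁻¹' {toVec (bb a) j}),
    fun j k hjk => ?_, ?_, fun j => ?_, fun j x hx y hy hxy => ?_⟩
  · refine Set.disjoint_left.2 fun x hxj hxk => hjk (Fin.ext (hcode.injOn j.isLt k.isLt ?_))
    exact hxj.2.symm.trans hxk.2
  · ext x
    simp only [Set.mem_iUnion, Set.mem_inter_iff, Set.mem_preimage, Set.mem_singleton_iff,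
      Set.mem_Iio, Set.mem_ofPred_eq]
    refine ⟨fun ⟨_, hx, _⟩ => hx, fun hx => ?_⟩
    obtain ⟨n, hn, hcx⟩ := hcode.surjOn (Set.mem_univ (codeMap a (toVec a x)))
    exact ⟨⟨n, hn⟩, hx, hcx.symm⟩
  · rw [Set.BijOn.ncard_inter_preimage hvec, ← Nat.card_coe_set_eq,
      LinearMap.natCard_preimage_singleton_of_surjective (codeMap_surjective ha)]
    simp
  · exact disjoint_xor_Ta_of_codeMap_eq ha hx.1 hy.1 hxy (hx.2.trans hy.2.symm)
end
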